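/- Let D > 0, let K ⊆ B_D(0) ⊆ ℝ^d be a Borel set with vol(K) > 0, let h > 0 and x₀ ∈ K, and let μ₁ := T_h δ_{x₀} be the law of one In-and-Out step started from the point mass at x₀. Then μ₁ is absolutely continuous with respect to the uniform measure π^X on K and dμ₁/dπ^X ≤ 2^{d/2}·exp(5D²/h) almost everywhere; i.e., μ₁ is M-warm with respect to π^X with M = 2^{d/2} exp(5D²/h). -/

import Mathlib

open MeasureTheory Real Set
open scoped ENNReal NNReal Pointwise Classical

noncomputable section

/-- Euclidean space ℝ^d. -/
abbrev Euc (d : ℕ) := EuclideanSpace ℝ (Fin d)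

/-- Gaussian density `φ_h(z) = (2πh)^{-d/2} exp(-|z|²/(2h))`. -/
def gaussDensity (d : ℕ) (h : ℝ) (z : Euc d) : ℝ :=
  (2 * Real.pi * h) ^ (-(d : ℝ) / 2) * Real.exp (-‖z‖ ^ 2 / (2 * h))

/-- Centered Gaussian measure `γ_h` with density `φ_h`. -/
def gaussMeasure (d : ℕ) (h : ℝ) : Measure (Euc d) :=
  volume.withDensity fun z => ENNReal.ofReal (gaussDensity d h z)

/-- Uniform probability measure on `K` (normalized restricted Lebesgue measure). -/
def unifMeasure {d : ℕ} (K : Set (Euc d)) : Measure (Euc d) :=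
  (volume K)⁻¹ • volume.restrict K

/-- Convolution of two measures. -/
def mconv {E : Type*} [MeasurableSpace E] [Add E] (μ ν : Measure E) : Measure E :=
  Measure.map (fun p : E × E => p.1 + p.2) (μ.prod ν)

/-- Local conductance `ℓ(y) = ∫_K φ_h(y-x) dx`. -/
def localCond {d : ℕ} (K : Set (Euc d)) (h : ℝ) (y : Euc d) : ℝ :=
  ∫ x in K, gaussDensity d h (y - x)

/-- The conditional measure `π^{X|Y=y}` with density `x ↦ φ_h(x-y)·1_K(x)/ℓ(y)`. -/
def condMeasure {d : ℕ} (K : Set (Euc d)) (h : ℝ) (y : Euc d) : Measure (Euc d) :=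
  volume.withDensity fun x =>
    ENNReal.ofReal (K.indicator (fun x' => gaussDensity d h (x' - y) / localCond K h y) x)

/-- The In-and-Out kernel `T_h μ = ∫ π^{X|Y=y} d(μ * γ_h)(y)`. -/
def inoKernel {d : ℕ} (K : Set (Euc d)) (h : ℝ) (μ : Measure (Euc d)) : Measure (Euc d) :=
  (mconv μ (gaussMeasure d h)).bind (condMeasure K h)

/-- `μ` is `M`-warm with respect to `π`. -/
def IsWarm {E : Type*} [MeasurableSpace E] (M : ℝ) (μ ν : Measure E) : Prop :=
  ∀ A : Set E, MeasurableSet A → μ A ≤ ENNReal.ofReal M * ν A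

/-- `χ^q` divergence; `+∞` if `μ` is not absolutely continuous w.r.t. `ν`. -/
def chiDiv {E : Type*} [MeasurableSpace E] (q : ℝ) (μ ν : Measure E) : ℝ≥0∞ :=
  if μ ≪ ν then (∫⁻ x, μ.rnDeriv ν x ^ q ∂ν) - 1 else ∞

/-- KL divergence; `+∞` if not absolutely continuous or not integrable. -/
def klDiv' {E : Type*} [MeasurableSpace E] (μ ν : Measure E) : ℝ≥0∞ :=
  if μ ≪ ν ∧ Integrable (fun x => (μ.rnDeriv ν x).toReal * Real.log (μ.rnDeriv ν x).toReal) ν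
  then ENNReal.ofReal (∫ x, (μ.rnDeriv ν x).toReal * Real.log (μ.rnDeriv ν x).toReal ∂ν)
  else ∞

/-- `q`-Rényi divergence `R_q = (q-1)⁻¹ log(1 + χ^q)`, with `R_1 = KL`. -/
def renyiDiv {E : Type*} [MeasurableSpace E] (q : ℝ) (μ ν : Measure E) : ℝ≥0∞ :=
  if q = 1 then klDiv' μ ν
  else if chiDiv q μ ν = ∞ then ∞
  else ENNReal.ofReal ((q - 1)⁻¹ * Real.log (1 + (chiDiv q μ ν).toReal))

/-- `R_∞(μ‖ν) = log ess sup_ν (dμ/dν)`. -/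
def renyiInfDiv {E : Type*} [MeasurableSpace E] (μ ν : Measure E) : ℝ≥0∞ :=
  if μ ≪ ν ∧ essSup (μ.rnDeriv ν) ν ≠ ∞
  then ENNReal.ofReal (Real.log (essSup (μ.rnDeriv ν) ν).toReal)
  else ∞

/-- `ν` satisfies a Poincaré inequality with constant `C`. -/
def SatisfiesPI {d : ℕ} (C : ℝ) (ν : Measure (Euc d)) : Prop :=
  ∀ f : Euc d → ℝ, ContDiff ℝ (⊤ : ℕ∞) f → HasCompactSupport f →
    ∫ x, (f x - ∫ y, f y ∂ν) ^ 2 ∂ν ≤ C * ∫ x, ‖fderiv ℝ f x‖ ^ 2 ∂ν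

/-- `ν` satisfies a log-Sobolev inequality with constant `C`. -/
def SatisfiesLSI {d : ℕ} (C : ℝ) (ν : Measure (Euc d)) : Prop :=
  ∀ f : Euc d → ℝ, ContDiff ℝ (⊤ : ℕ∞) f → HasCompactSupport f →
    (∫ x, f x ^ 2 * Real.log (f x ^ 2) ∂ν)
      - (∫ x, f x ^ 2 ∂ν) * Real.log (∫ x, f x ^ 2 ∂ν)
      ≤ 2 * C * ∫ x, ‖fderiv ℝ f x‖ ^ 2 ∂ν

/-- Lebesgue density of `μ * γ_t`: `y ↦ ∫ φ_t(y - x) dμ(x)`. -/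
def heatDensity (d : ℕ) (μ : Measure (Euc d)) (t : ℝ) (y : Euc d) : ℝ :=
  ∫ x, gaussDensity d t (y - x) ∂μ

/-!
One step from `δ_{x₀}` has Lebesgue density
`x ↦ 1_K(x) ∫ φ_h(z) φ_h(x - (x₀ + z)) / ℓ(x₀ + z) dz`.
Since `K ⊆ B_D(0)`, every point of `K` is within `‖y‖ + D` of `y`, so
`ℓ(y) ≥ vol(K) (2πh)^{-d/2} exp(-(‖y‖ + D)² / 2h)`. Together with the inequality
`2(‖y‖ + D)² + ‖z - x‖² ≤ 2‖x - y‖² + 2‖z‖² + 18D²` for `y = x₀ + z`, this bounds the integrand by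
`vol(K)⁻¹ 2^{d/2} e^{9D²/2h} φ_{2h}(z - x)`, whose integral in `z` is
`vol(K)⁻¹ 2^{d/2} e^{9D²/2h} ≤ vol(K)⁻¹ 2^{d/2} e^{5D²/h}`.
-/

open scoped RealInnerProductSpace

lemma MeasureTheory.Measure.bind_withDensity {α β : Type*} [MeasurableSpace α] [MeasurableSpace β]
    (ρ : Measure α) [SFinite ρ] (ν : Measure β) [SFinite ν] {k : α → β → ℝ≥0∞}
    (hk : Measurable (Function.uncurry k)) :
    ρ.bind (fun y => ν.withDensity (k y)) = ν.withDensity (fun x => ∫⁻ y, k y x ∂ρ) := by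
  have hmeas : Measurable fun y => ν.withDensity (k y) :=
    Measure.measurable_of_measurable_coe _ fun s hs => by
      simp_rw [withDensity_apply _ hs]
      exact hk.lintegral_prod_right'
  ext s hs
  rw [Measure.bind_apply hs hmeas.aemeasurable, withDensity_apply _ hs]
  simp_rw [withDensity_apply _ hs]
  exact lintegral_lintegral_swap hk.aemeasurable

lemma mconv_dirac_left {E : Type*} [MeasurableSpace E] [Add E] [MeasurableAdd₂ E]
    (x : E) (ν : Measure E) [SFinite ν] :
    mconv (Measure.dirac x) ν = ν.map (x + ·) := by
  rw [mconv, Measure.dirac_prod, Measure.map_map measurable_add measurable_prodMk_left]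
  rfl

namespace IsWarm

variable {E : Type*} [MeasurableSpace E] {M M' : ℝ} {μ ν : Measure E}

lemma mono (hμ : IsWarm M μ ν) (hM : M ≤ M') : IsWarm M' μ ν :=
  fun A hA => (hμ A hA).trans (by gcongr)

lemma absolutelyContinuous (hμ : IsWarm M μ ν) : μ ≪ ν :=
  .mk fun A hA hνA => le_antisymm ((hμ A hA).trans_eq (by rw [hνA, mul_zero])) zero_le

lemma ae_rnDeriv_le [SigmaFinite ν] (hμ : IsWarm M μ ν) :
    ∀ᵐ x ∂ν, μ.rnDeriv ν x ≤ ENNReal.ofReal M :=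
  ae_le_of_forall_setLIntegral_le_of_sigmaFinite (μ.measurable_rnDeriv ν) fun A hA _ => by
    rw [setLIntegral_const]
    exact (Measure.setLIntegral_rnDeriv_le A).trans (hμ A hA)

end IsWarm

section Gaussian

variable {d : ℕ} {h : ℝ}

lemma continuous_gaussDensity (d : ℕ) (h : ℝ) : Continuous (gaussDensity d h) := by
  unfold gaussDensity; fun_prop

lemma gaussDensity_pos (hh : 0 < h) (z : Euc d) : 0 < gaussDensity d h z := by
  unfold gaussDensity; positivity

lemma integral_gaussDensity (hh : 0 < h) : ∫ z, gaussDensity d h z = 1 := by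
  have hb : 0 < (2 * h)⁻¹ := by positivity
  have hexp : ∀ z : Euc d, -‖z‖ ^ 2 / (2 * h) = -(2 * h)⁻¹ * ‖z‖ ^ 2 := fun z => by ring
  simp_rw [gaussDensity, hexp, integral_const_mul,
    GaussianFourier.integral_rexp_neg_mul_sq_norm hb, finrank_euclideanSpace_fin]
  rw [div_inv_eq_mul, show π * (2 * h) = 2 * π * h by ring, neg_div, Real.rpow_neg (by positivity)]
  exact inv_mul_cancel₀ (by positivity)

lemma integrable_gaussDensity (hh : 0 < h) : Integrable (gaussDensity d h) :=
  .of_integral_ne_zero <| by simp [integral_gaussDensity hh]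

lemma lintegral_gaussDensity (hh : 0 < h) : ∫⁻ z, ENNReal.ofReal (gaussDensity d h z) = 1 := by
  rw [← ofReal_integral_eq_lintegral_ofReal (integrable_gaussDensity hh)
    (.of_forall fun z => (gaussDensity_pos hh z).le), integral_gaussDensity hh, ENNReal.ofReal_one]

lemma gaussDensity_two_mul (hh : 0 < h) (z : Euc d) :
    (2 * π * h) ^ (-(d : ℝ) / 2) * exp (-‖z‖ ^ 2 / (4 * h))
      = 2 ^ ((d : ℝ) / 2) * gaussDensity d (2 * h) z := by
  rw [gaussDensity, show 2 * π * (2 * h) = 2 * (2 * π * h) by ring,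
    Real.mul_rpow zero_le_two (by positivity), neg_div, Real.rpow_neg zero_le_two,
    show 2 * (2 * h) = 4 * h by ring, ← mul_assoc, ← mul_assoc, mul_inv_cancel₀ (by positivity),
    one_mul, neg_div]

end Gaussian

lemma norm_sq_add_sq_le_of_norm_le {E : Type*} [NormedAddCommGroup E] [InnerProductSpace ℝ E]
    {D : ℝ} {x x₀ : E} (hx : ‖x‖ ≤ D) (hx₀ : ‖x₀‖ ≤ D) (y : E) :
    2 * (‖y‖ + D) ^ 2 + ‖y - (x + x₀)‖ ^ 2 ≤ 2 * ‖x - y‖ ^ 2 + 2 * ‖y - x₀‖ ^ 2 + 18 * D ^ 2 := by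
  have hinner : ⟪x + x₀, y⟫ ≤ 2 * D * ‖y‖ :=
    (real_inner_le_norm _ _).trans (by gcongr; exact (norm_add_le _ _).trans (by linarith))
  have hexpand : 2 * ‖x - y‖ ^ 2 + 2 * ‖y - x₀‖ ^ 2 - ‖y - (x + x₀)‖ ^ 2
      = ‖x - x₀‖ ^ 2 + 3 * ‖y‖ ^ 2 - 2 * ⟪x + x₀, y⟫ := by
    simp only [norm_sub_sq_real, norm_add_sq_real, inner_add_left, inner_add_right,
      real_inner_comm x y, real_inner_comm x₀ y, real_inner_comm x₀ x]
    ring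
  -- the slack is `‖x - x₀‖² + (‖y‖ - 4D)² + 2 (2D‖y‖ - ⟪x + x₀, y⟫)`
  nlinarith [sq_nonneg (‖y‖ - 4 * D), sq_nonneg ‖x - x₀‖]

section InAndOut

variable {d : ℕ} {K : Set (Euc d)} {h D : ℝ}

lemma localCond_ge (hh : 0 < h) (hK : MeasurableSet K) (hKD : K ⊆ Metric.closedBall 0 D)
    (hKfin : volume K ≠ ∞) (y : Euc d) :
    (volume K).toReal * ((2 * π * h) ^ (-(d : ℝ) / 2) * exp (-(‖y‖ + D) ^ 2 / (2 * h)))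
      ≤ localCond K h y := by
  rw [← smul_eq_mul, ← measureReal_def, ← setIntegral_const]
  refine setIntegral_mono_on (integrableOn_const hKfin)
    ((integrable_gaussDensity hh).comp_sub_left y).integrableOn hK fun x hx => ?_
  have hx : ‖x‖ ≤ D := by simpa using hKD hx
  have hyx : ‖y - x‖ ≤ ‖y‖ + D := (norm_sub_le y x).trans (by gcongr)
  unfold gaussDensity
  gcongr

lemma gaussDensity_mul_div_localCond_le (hh : 0 < h) (hK : MeasurableSet K)
    (hKD : K ⊆ Metric.closedBall 0 D) (hK0 : volume K ≠ 0) (hKfin : volume K ≠ ∞) {x x₀ : Euc d}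
    (hx : x ∈ K) (hx₀ : x₀ ∈ K) (z : Euc d) :
    gaussDensity d h z * (gaussDensity d h (x - (x₀ + z)) / localCond K h (x₀ + z))
      ≤ (volume K).toReal⁻¹ * (2 ^ ((d : ℝ) / 2) * exp (9 * D ^ 2 / (2 * h)))
        * gaussDensity d (2 * h) (z - x) := by
  set y := x₀ + z
  have hV : 0 < (volume K).toReal := ENNReal.toReal_pos hK0 hKfin
  have hexp : exp (-‖z‖ ^ 2 / (2 * h)) * exp (-‖x - y‖ ^ 2 / (2 * h))
      ≤ exp (9 * D ^ 2 / (2 * h)) * exp (-‖z - x‖ ^ 2 / (4 * h))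
        * exp (-(‖y‖ + D) ^ 2 / (2 * h)) := by
    have hz : z = y - x₀ := by simp [y]
    have hzx : z - x = y - (x + x₀) := by rw [hz]; abel
    have hnorm := norm_sq_add_sq_le_of_norm_le (by simpa using hKD hx) (by simpa using hKD hx₀) y
    rw [← hz, ← hzx] at hnorm
    rw [← exp_add, ← exp_add, ← exp_add, exp_le_exp,
      show -‖z‖ ^ 2 / (2 * h) + -‖x - y‖ ^ 2 / (2 * h)
        = (-2 * ‖z‖ ^ 2 - 2 * ‖x - y‖ ^ 2) / (4 * h) by field_simp; ring,
      show 9 * D ^ 2 / (2 * h) + -‖z - x‖ ^ 2 / (4 * h) + -(‖y‖ + D) ^ 2 / (2 * h)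
        = (18 * D ^ 2 - ‖z - x‖ ^ 2 - 2 * (‖y‖ + D) ^ 2) / (4 * h) by field_simp; ring]
    exact div_le_div_of_nonneg_right (by linarith) (by positivity)
  calc gaussDensity d h z * (gaussDensity d h (x - y) / localCond K h y)
      ≤ gaussDensity d h z * (gaussDensity d h (x - y)
          / ((volume K).toReal * ((2 * π * h) ^ (-(d : ℝ) / 2)
            * exp (-(‖y‖ + D) ^ 2 / (2 * h))))) :=
        mul_le_mul_of_nonneg_left (div_le_div_of_nonneg_left (gaussDensity_pos hh _).le
          (by positivity) (localCond_ge hh hK hKD hKfin y)) (gaussDensity_pos hh z).le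
    _ = (volume K).toReal⁻¹ * (2 * π * h) ^ (-(d : ℝ) / 2)
          * (exp (-‖z‖ ^ 2 / (2 * h)) * exp (-‖x - y‖ ^ 2 / (2 * h))
            / exp (-(‖y‖ + D) ^ 2 / (2 * h))) := by
        unfold gaussDensity
        field_simp
    _ ≤ (volume K).toReal⁻¹ * (2 * π * h) ^ (-(d : ℝ) / 2)
          * (exp (9 * D ^ 2 / (2 * h)) * exp (-‖z - x‖ ^ 2 / (4 * h))) := by
        gcongr
        rwa [div_le_iff₀ (exp_pos _)]
    _ = (volume K).toReal⁻¹ * exp (9 * D ^ 2 / (2 * h))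
          * ((2 * π * h) ^ (-(d : ℝ) / 2) * exp (-‖z - x‖ ^ 2 / (4 * h))) := by ring
    _ = _ := by rw [gaussDensity_two_mul hh]; ring

def condDensity (K : Set (Euc d)) (h : ℝ) (y x : Euc d) : ℝ≥0∞ :=
  ENNReal.ofReal (K.indicator (fun x' => gaussDensity d h (x' - y) / localCond K h y) x)

def oneStepDensity (K : Set (Euc d)) (h : ℝ) (x₀ x : Euc d) : ℝ≥0∞ :=
  ∫⁻ z, ENNReal.ofReal (gaussDensity d h z) * condDensity K h (x₀ + z) x

lemma measurable_localCond (K : Set (Euc d)) (h : ℝ) : Measurable (localCond K h) :=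
  ((continuous_gaussDensity d h).comp (continuous_fst.sub continuous_snd)).stronglyMeasurable
    |>.integral_prod_right' (ν := volume.restrict K) |>.measurable

lemma measurable_condDensity (hK : MeasurableSet K) (h : ℝ) :
    Measurable (Function.uncurry (condDensity K h)) := by
  refine Measurable.ennreal_ofReal (Measurable.ite (measurable_snd hK) ?_ measurable_const)
  exact ((continuous_gaussDensity d h).comp (continuous_snd.sub continuous_fst)).measurable.div
    ((measurable_localCond K h).comp measurable_fst)

lemma condMeasure_eq_withDensity (K : Set (Euc d)) (h : ℝ) (y : Euc d) :
    condMeasure K h y = volume.withDensity (condDensity K h y) := by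
  unfold condMeasure condDensity; rfl

lemma inoKernel_dirac_eq_withDensity (hK : MeasurableSet K) (x₀ : Euc d) :
    inoKernel K h (Measure.dirac x₀) = volume.withDensity (oneStepDensity K h x₀) := by
  have : SFinite (gaussMeasure d h) := by rw [gaussMeasure]; infer_instance
  have hcond : condMeasure K h = fun y => volume.withDensity (condDensity K h y) :=
    funext (condMeasure_eq_withDensity K h)
  rw [inoKernel, mconv_dirac_left, hcond,
    Measure.bind_withDensity _ _ (measurable_condDensity hK h)]
  refine congrArg _ (funext fun x => ?_)
  have hk : Measurable fun y => condDensity K h y x :=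
    (measurable_condDensity hK h).of_uncurry_right
  have hk' : Measurable fun z => condDensity K h (x₀ + z) x := hk.comp (measurable_const_add x₀)
  rw [lintegral_map hk (measurable_const_add x₀), gaussMeasure,
    lintegral_withDensity_eq_lintegral_mul _
      (continuous_gaussDensity d h).measurable.ennreal_ofReal hk']
  rfl

lemma oneStepDensity_le (hh : 0 < h) (hK : MeasurableSet K) (hKD : K ⊆ Metric.closedBall 0 D)
    (hK0 : volume K ≠ 0) (hKfin : volume K ≠ ∞) {x₀ : Euc d} (hx₀ : x₀ ∈ K) (x : Euc d) :
    oneStepDensity K h x₀ x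
      ≤ K.indicator (fun _ => ENNReal.ofReal (2 ^ ((d : ℝ) / 2) * exp (9 * D ^ 2 / (2 * h)))
          * (volume K)⁻¹) x := by
  by_cases hx : x ∈ K
  swap
  · simp [oneStepDensity, condDensity, indicator_of_notMem hx]
  set C := 2 ^ ((d : ℝ) / 2) * exp (9 * D ^ 2 / (2 * h))
  have hV : 0 < (volume K).toReal := ENNReal.toReal_pos hK0 hKfin
  rw [indicator_of_mem hx]
  calc oneStepDensity K h x₀ x
      = ∫⁻ z, ENNReal.ofReal (gaussDensity d h z
          * (gaussDensity d h (x - (x₀ + z)) / localCond K h (x₀ + z))) := by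
        simp only [oneStepDensity, condDensity, indicator_of_mem hx,
          ENNReal.ofReal_mul (gaussDensity_pos hh _).le]
    _ ≤ ∫⁻ z, ENNReal.ofReal ((volume K).toReal⁻¹ * C)
          * ENNReal.ofReal (gaussDensity d (2 * h) (z - x)) := lintegral_mono fun z => by
        rw [← ENNReal.ofReal_mul (by positivity)]
        exact ENNReal.ofReal_le_ofReal
          (gaussDensity_mul_div_localCond_le hh hK hKD hK0 hKfin hx hx₀ z)
    _ = ENNReal.ofReal C * (volume K)⁻¹ := by
        rw [lintegral_const_mul' _ _ ENNReal.ofReal_ne_top,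
          lintegral_sub_right_eq_self (fun z => ENNReal.ofReal (gaussDensity d (2 * h) z)) x,
          lintegral_gaussDensity (by positivity), mul_one, mul_comm,
          ENNReal.ofReal_mul (by positivity), ENNReal.ofReal_inv_of_pos hV,
          ENNReal.ofReal_toReal hKfin]

lemma isWarm_inoKernel_dirac (hh : 0 < h) (hK : MeasurableSet K)
    (hKD : K ⊆ Metric.closedBall 0 D) (hK0 : volume K ≠ 0) (hKfin : volume K ≠ ∞) {x₀ : Euc d}
    (hx₀ : x₀ ∈ K) :
    IsWarm (2 ^ ((d : ℝ) / 2) * exp (9 * D ^ 2 / (2 * h))) (inoKernel K h (Measure.dirac x₀))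
      (unifMeasure K) := by
  intro A hA
  rw [inoKernel_dirac_eq_withDensity hK, withDensity_apply _ hA, unifMeasure, Measure.smul_apply,
    smul_eq_mul, Measure.restrict_apply hA, ← mul_assoc, inter_comm,
    ← Measure.restrict_apply hK, ← lintegral_indicator_const hK]
  exact lintegral_mono (oneStepDensity_le hh hK hKD hK0 hKfin hx₀)

end InAndOut

theorem stmt15_general (d : ℕ) (D : ℝ) (K : Set (Euc d))
    (hK : MeasurableSet K) (hKD : K ⊆ Metric.closedBall (0 : Euc d) D)
    (hK0 : 0 < volume K) (h : ℝ) (hh : 0 < h) (x₀ : Euc d) (hx₀ : x₀ ∈ K) :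
    inoKernel K h (Measure.dirac x₀) ≪ unifMeasure K ∧
    (∀ᵐ x ∂(unifMeasure K),
      (inoKernel K h (Measure.dirac x₀)).rnDeriv (unifMeasure K) x
        ≤ ENNReal.ofReal ((2 : ℝ) ^ ((d : ℝ) / 2) * Real.exp (5 * D ^ 2 / h))) ∧
    IsWarm ((2 : ℝ) ^ ((d : ℝ) / 2) * Real.exp (5 * D ^ 2 / h))
      (inoKernel K h (Measure.dirac x₀)) (unifMeasure K) := by
  have hKfin : volume K ≠ ∞ := ((measure_mono hKD).trans_lt measure_closedBall_lt_top).ne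
  have : IsProbabilityMeasure (unifMeasure K) :=
    ProbabilityTheory.cond_isProbabilityMeasure_of_finite hK0.ne' hKfin
  have hexp : exp (9 * D ^ 2 / (2 * h)) ≤ exp (5 * D ^ 2 / h) := by
    rw [exp_le_exp, div_le_div_iff₀ (by positivity) hh]
    nlinarith [sq_nonneg D]
  have hwarm : IsWarm (2 ^ ((d : ℝ) / 2) * exp (5 * D ^ 2 / h)) (inoKernel K h (Measure.dirac x₀))
      (unifMeasure K) := (isWarm_inoKernel_dirac hh hK hKD hK0.ne' hKfin hx₀).mono (by gcongr)
  exact ⟨hwarm.absolutelyContinuous, hwarm.ae_rnDeriv_le, hwarm⟩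

/-- one In-and-Out step from a point mass at `x₀ ∈ K ⊆ B_D(0)` is
`M`-warm with respect to the uniform measure, with `M = 2^{d/2} exp(5D²/h)`. -/
theorem stmt15 (d : ℕ) (hd : 1 ≤ d) (D : ℝ) (hD : 0 < D) (K : Set (Euc d))
    (hK : MeasurableSet K) (hKD : K ⊆ Metric.closedBall (0 : Euc d) D)
    (hK0 : 0 < volume K) (h : ℝ) (hh : 0 < h) (x₀ : Euc d) (hx₀ : x₀ ∈ K) :
    inoKernel K h (Measure.dirac x₀) ≪ unifMeasure K ∧
    (∀ᵐ x ∂(unifMeasure K),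
      (inoKernel K h (Measure.dirac x₀)).rnDeriv (unifMeasure K) x
        ≤ ENNReal.ofReal ((2 : ℝ) ^ ((d : ℝ) / 2) * Real.exp (5 * D ^ 2 / h))) ∧
    IsWarm ((2 : ℝ) ^ ((d : ℝ) / 2) * Real.exp (5 * D ^ 2 / h))
      (inoKernel K h (Measure.dirac x₀)) (unifMeasure K) :=
  stmt15_general d D K hK hKD hK0 h hh x₀ hx₀
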